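/- Consider the system A₁X₁B₁ + C₁X₂D₁ = E₁, A₂X₂B₂ + C₂X₃D₂ = E₂ over ℂ. If it is solvable, then rank of the block matrix with rows [B₁; (E₁, C₁); (D₁, 0, B₂); (0, A₂, -E₂); (0, 0, D₂)] (columns corresponding to the appropriate sizes) equals rank[C₁; A₂] + rank of the matrix [[B₁, 0],[D₁, B₂],[0, D₂]]. -/

import Mathlib

/-!
Row operations with `A₁X₁`, `C₁X₂`, `C₂X₃` and a column operation with `X₂B₂` clear both
right-hand sides out of the block matrix without changing its rank. What remains is, up to a
permutation of rows and columns, the block-diagonal matrix with blocks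
`[[B₁, 0], [D₁, B₂], [0, D₂]]` and `[C₁; A₂]`, whose rank is the sum of the two ranks.
-/

open Matrix

theorem Submodule.finrank_prod {K M N : Type*} [Field K] [AddCommGroup M] [AddCommGroup N]
    [Module K M] [Module K N] [FiniteDimensional K M] [FiniteDimensional K N]
    (p : Submodule K M) (q : Submodule K N) :
    Module.finrank K (p.prod q) = Module.finrank K p + Module.finrank K q := by
  rw [← p.range_subtype, ← q.range_subtype, ← LinearMap.range_prodMap,
    LinearMap.finrank_range_of_inj (Subtype.val_injective.prodMap Subtype.val_injective),
    Module.finrank_prod, p.range_subtype, q.range_subtype]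

namespace Matrix

variable {K : Type*} [Field K]

theorem rank_fromBlocks_zero_zero {m m' n n' : Type*} [Fintype m] [Fintype m'] [Fintype n]
    [Fintype n'] (A : Matrix m n K) (D : Matrix m' n' K) :
    (fromBlocks A 0 0 D).rank = A.rank + D.rank := by
  let eM := LinearEquiv.sumArrowLequivProdArrow m m' K K
  let eN := LinearEquiv.sumArrowLequivProdArrow n n' K K
  have hprodMap : (fromBlocks A 0 0 D).mulVecLin
      = eM.symm.toLinearMap ∘ₗ A.mulVecLin.prodMap D.mulVecLin ∘ₗ eN.toLinearMap := by
    ext x (i | i) <;>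
      simp [eM, eN, fromBlocks_mulVec, LinearEquiv.sumArrowLequivProdArrow,
        Equiv.sumArrowEquivProdArrow]
  rw [rank, rank, rank, hprodMap, LinearMap.range_comp,
    LinearMap.range_comp_of_range_eq_top _ eN.range, LinearEquiv.finrank_map_eq,
    LinearMap.range_prodMap, Submodule.finrank_prod]

variable {q₁ m₁ q₂ m₂ q₃ n₁ p₂ n₂ : Type*}

def twoStepBlock (B₁ : Matrix q₁ n₁ K) (E₁ : Matrix m₁ n₁ K) (C₁ : Matrix m₁ p₂ K)
    (D₁ : Matrix q₂ n₁ K) (B₂ : Matrix q₂ n₂ K) (A₂ : Matrix m₂ p₂ K) (E₂ : Matrix m₂ n₂ K)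
    (D₂ : Matrix q₃ n₂ K) : Matrix (q₁ ⊕ (m₁ ⊕ (q₂ ⊕ (m₂ ⊕ q₃)))) (n₁ ⊕ (p₂ ⊕ n₂)) K :=
  fromRows (fromCols B₁ (fromCols 0 0))
    (fromRows (fromCols E₁ (fromCols C₁ 0))
      (fromRows (fromCols D₁ (fromCols 0 B₂))
        (fromRows (fromCols 0 (fromCols A₂ (-E₂)))
          (fromCols 0 (fromCols 0 D₂)))))

def twoStepRowPerm {a b c d e : Type*} : (a ⊕ (c ⊕ e)) ⊕ (b ⊕ d) ≃ a ⊕ (b ⊕ (c ⊕ (d ⊕ e))) where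
  toFun
    | .inl (.inl x) => .inl x
    | .inl (.inr (.inl x)) => .inr (.inr (.inl x))
    | .inl (.inr (.inr x)) => .inr (.inr (.inr (.inr x)))
    | .inr (.inl x) => .inr (.inl x)
    | .inr (.inr x) => .inr (.inr (.inr (.inl x)))
  invFun
    | .inl x => .inl (.inl x)
    | .inr (.inl x) => .inr (.inl x)
    | .inr (.inr (.inl x)) => .inl (.inr (.inl x))
    | .inr (.inr (.inr (.inl x))) => .inr (.inr x)
    | .inr (.inr (.inr (.inr x))) => .inl (.inr (.inr x))
  left_inv := by rintro ((x | x | x) | x | x) <;> rfl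
  right_inv := by rintro (x | x | x | x | x) <;> rfl

def twoStepColPerm {a b c : Type*} : (a ⊕ c) ⊕ b ≃ a ⊕ (b ⊕ c) :=
  (Equiv.sumAssoc a c b).trans ((Equiv.refl a).sumCongr (Equiv.sumComm c b))

variable [Fintype q₁] [Fintype m₁] [Fintype q₂] [Fintype m₂] [Fintype q₃]
  [Fintype n₁] [Fintype p₂] [Fintype n₂]

theorem rank_twoStepBlock_zero_zero (B₁ : Matrix q₁ n₁ K) (C₁ : Matrix m₁ p₂ K)
    (D₁ : Matrix q₂ n₁ K) (B₂ : Matrix q₂ n₂ K) (A₂ : Matrix m₂ p₂ K) (D₂ : Matrix q₃ n₂ K) :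
    (twoStepBlock B₁ 0 C₁ D₁ B₂ A₂ 0 D₂).rank =
      (fromRows C₁ A₂).rank +
        (fromRows (fromCols B₁ 0) (fromRows (fromCols D₁ B₂) (fromCols 0 D₂))).rank := by
  have hblock : (twoStepBlock B₁ 0 C₁ D₁ B₂ A₂ 0 D₂).submatrix twoStepRowPerm twoStepColPerm =
      fromBlocks (fromRows (fromCols B₁ 0) (fromRows (fromCols D₁ B₂) (fromCols 0 D₂))) 0 0
        (fromRows C₁ A₂) := by
    ext ((i | i | i) | i | i) ((j | j) | j) <;>
      simp [twoStepBlock, twoStepRowPerm, twoStepColPerm]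
  rw [← rank_submatrix _ twoStepRowPerm twoStepColPerm, hblock, rank_fromBlocks_zero_zero,
    add_comm]

variable [DecidableEq q₁] [DecidableEq m₁] [DecidableEq q₂] [DecidableEq m₂] [DecidableEq q₃]
  [DecidableEq n₁] [DecidableEq p₂] [DecidableEq n₂]

theorem rank_twoStepBlock_add (B₁ : Matrix q₁ n₁ K) (E₁ : Matrix m₁ n₁ K) (C₁ : Matrix m₁ p₂ K)
    (D₁ : Matrix q₂ n₁ K) (B₂ : Matrix q₂ n₂ K) (A₂ : Matrix m₂ p₂ K) (E₂ : Matrix m₂ n₂ K)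
    (D₂ : Matrix q₃ n₂ K) (Y₁ : Matrix m₁ q₁ K) (X₂ : Matrix p₂ q₂ K) (Y₂ : Matrix m₂ q₃ K) :
    (twoStepBlock B₁ (E₁ + Y₁ * B₁ + C₁ * X₂ * D₁) C₁ D₁ B₂ A₂
      (E₂ + A₂ * X₂ * B₂ + Y₂ * D₂) D₂).rank =
    (twoStepBlock B₁ E₁ C₁ D₁ B₂ A₂ E₂ D₂).rank := by
  -- `L` subtracts `Y₁ • row₁ + C₁X₂ • row₃` from row 2 and adds `Y₂ • row₅` to row 4;
  -- `R` then adds `column₂ • X₂B₂` to column 3.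
  let L : Matrix (q₁ ⊕ (m₁ ⊕ (q₂ ⊕ (m₂ ⊕ q₃)))) (q₁ ⊕ (m₁ ⊕ (q₂ ⊕ (m₂ ⊕ q₃)))) K :=
    fromBlocks 1 0 (fromRows (-Y₁) 0)
      (fromBlocks 1 (fromCols (-(C₁ * X₂)) 0) 0 (fromBlocks 1 0 0 (fromBlocks 1 Y₂ 0 1)))
  let R : Matrix (n₁ ⊕ (p₂ ⊕ n₂)) (n₁ ⊕ (p₂ ⊕ n₂)) K :=
    fromBlocks 1 0 0 (fromBlocks 1 (X₂ * B₂) 0 1)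
  have hL : L.det = 1 := by simp [L, det_fromBlocks_zero₁₂, det_fromBlocks_zero₂₁]
  have hR : R.det = 1 := by simp [R, det_fromBlocks_zero₂₁]
  have hLR : L * twoStepBlock B₁ (E₁ + Y₁ * B₁ + C₁ * X₂ * D₁) C₁ D₁ B₂ A₂
      (E₂ + A₂ * X₂ * B₂ + Y₂ * D₂) D₂ * R = twoStepBlock B₁ E₁ C₁ D₁ B₂ A₂ E₂ D₂ := by
    ext (i | i | i | i | i) (j | j | j) <;>
      simp [L, R, twoStepBlock, fromBlocks_multiply, fromBlocks_mul_fromRows, fromRows_mul,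
        fromCols_mul_fromBlocks, fromCols_mul_fromRows, mul_fromCols, Matrix.add_mul,
        Matrix.mul_assoc, fromRows_fromCols_eq_fromBlocks]
    ring
  rw [← hLR, rank_mul_eq_left_of_isUnit_det R _ (by simp [hR]),
    rank_mul_eq_right_of_isUnit_det L _ (by simp [hL])]

end Matrix

theorem two_step_chain_rank_eq_35
    {m₁ p₁ q₁ n₁ m₂ p₂ q₂ n₂ p₃ q₃ : ℕ}
    (A₁ : Matrix (Fin m₁) (Fin p₁) ℂ) (B₁ : Matrix (Fin q₁) (Fin n₁) ℂ)
    (C₁ : Matrix (Fin m₁) (Fin p₂) ℂ) (D₁ : Matrix (Fin q₂) (Fin n₁) ℂ)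
    (E₁ : Matrix (Fin m₁) (Fin n₁) ℂ)
    (A₂ : Matrix (Fin m₂) (Fin p₂) ℂ) (B₂ : Matrix (Fin q₂) (Fin n₂) ℂ)
    (C₂ : Matrix (Fin m₂) (Fin p₃) ℂ) (D₂ : Matrix (Fin q₃) (Fin n₂) ℂ)
    (E₂ : Matrix (Fin m₂) (Fin n₂) ℂ)
    (X₁ : Matrix (Fin p₁) (Fin q₁) ℂ) (X₂ : Matrix (Fin p₂) (Fin q₂) ℂ)
    (X₃ : Matrix (Fin p₃) (Fin q₃) ℂ)
    (h₁ : A₁ * X₁ * B₁ + C₁ * X₂ * D₁ = E₁)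
    (h₂ : A₂ * X₂ * B₂ + C₂ * X₃ * D₂ = E₂) :
    (Matrix.fromRows
      (Matrix.fromCols B₁ (Matrix.fromCols (0 : Matrix (Fin q₁) (Fin p₂) ℂ)
        (0 : Matrix (Fin q₁) (Fin n₂) ℂ)))
      (Matrix.fromRows
        (Matrix.fromCols E₁ (Matrix.fromCols C₁ (0 : Matrix (Fin m₁) (Fin n₂) ℂ)))
        (Matrix.fromRows
          (Matrix.fromCols D₁ (Matrix.fromCols (0 : Matrix (Fin q₂) (Fin p₂) ℂ) B₂))
          (Matrix.fromRows
            (Matrix.fromCols (0 : Matrix (Fin m₂) (Fin n₁) ℂ)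
              (Matrix.fromCols A₂ (-E₂)))
            (Matrix.fromCols (0 : Matrix (Fin q₃) (Fin n₁) ℂ)
              (Matrix.fromCols (0 : Matrix (Fin q₃) (Fin p₂) ℂ) D₂)))))).rank =
    (Matrix.fromRows C₁ A₂).rank +
    (Matrix.fromRows
      (Matrix.fromCols B₁ (0 : Matrix (Fin q₁) (Fin n₂) ℂ))
      (Matrix.fromRows
        (Matrix.fromCols D₁ B₂)
        (Matrix.fromCols (0 : Matrix (Fin q₃) (Fin n₁) ℂ) D₂))).rank := by
  have hrank := rank_twoStepBlock_add B₁ 0 C₁ D₁ B₂ A₂ 0 D₂ (A₁ * X₁) X₂ (C₂ * X₃)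
  rw [zero_add, zero_add, h₁, h₂, rank_twoStepBlock_zero_zero] at hrank
  exact hrank
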